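/- arXiv:2412.06663 — 2 statements merged into one kernel-verified Lean document; each statement's English description precedes it below -/
import Mathlib

section
/- Assume P is transitive. Then the Strong Supplementation Principle holds if and only if for all x, y ∈ U: if every u exterior to y is exterior to x, then Ing x y. -/
variable {U : Type*}

/-- `x` is an ingrediens of `y`. -/
def Ing (P : U → U → Prop) (x y : U) : Prop := x = y ∨ P x y

/-- `x` and `y` overlap. -/
def Ov (P : U → U → Prop) (x y : U) : Prop := ∃ z, Ing P z x ∧ Ing P z y

/-- `x` is exterior to `y`. -/
def MExt (P : U → U → Prop) (x y : U) : Prop := ¬ Ov P x y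

/-- `x` is a mereological sum of all elements of `S`. -/
def MSum (P : U → U → Prop) (x : U) (S : Set U) : Prop :=
  (∀ s ∈ S, Ing P s x) ∧ ∀ u, Ing P u x → ∃ s ∈ S, Ov P s u

/-- `x` is a supremum (least upper bound) of `S`. -/
def MSup (P : U → U → Prop) (x : U) (S : Set U) : Prop :=
  (∀ s ∈ S, Ing P s x) ∧ ∀ u, (∀ s ∈ S, Ing P s u) → Ing P x u

/-- `x` and `y` cross (properly overlap). -/
def POv (P : U → U → Prop) (x y : U) : Prop :=
  x ≠ y ∧ ¬ P x y ∧ ¬ P y x ∧ ∃ z, P z x ∧ P z y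

theorem Ing.trans {P : U → U → Prop} (htrans : ∀ x y z, P x y → P y z → P x z) {x y z : U}
    (hxy : Ing P x y) (hyz : Ing P y z) : Ing P x z := by
  rcases hxy with rfl | hxy
  · exact hyz
  rcases hyz with rfl | hyz
  · exact Or.inr hxy
  · exact Or.inr (htrans _ _ _ hxy hyz)

theorem Ov.mono_left {P : U → U → Prop} (htrans : ∀ x y z, P x y → P y z → P x z) {x x' y : U}
    (hx : Ing P x x') (h : Ov P x y) : Ov P x' y :=
  let ⟨z, hzx, hzy⟩ := h
  ⟨z, hzx.trans htrans hx, hzy⟩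

theorem ing_of_forall_mext_imp_of_ssp {P : U → U → Prop}
    (ssp : ∀ x y, ¬ Ing P x y → ∃ z, Ing P z x ∧ MExt P z y) {x y : U}
    (h : ∀ u, MExt P u y → MExt P u x) : Ing P x y := by
  by_contra hxy
  obtain ⟨z, hzx, hzy⟩ := ssp x y hxy
  exact h z hzy ⟨z, Or.inl rfl, hzx⟩

/-- Were every ingrediens of `x` to overlap `y`, so would everything overlapping `x`,
  and the criterion would give `Ing P x y`. -/
theorem ssp_of_forall_mext_imp_ing {P : U → U → Prop} (htrans : ∀ x y z, P x y → P y z → P x z)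
    (hext : ∀ x y, (∀ u, MExt P u y → MExt P u x) → Ing P x y) {x y : U} (hxy : ¬ Ing P x y) :
    ∃ z, Ing P z x ∧ MExt P z y := by
  by_contra! hov
  refine hxy (hext x y fun u huy hux => huy ?_)
  obtain ⟨z, hzu, hzx⟩ := hux
  have hzy : Ov P z y := not_not.mp (hov z hzx)
  exact hzy.mono_left htrans hzu

theorem stmt_10 (P : U → U → Prop)
    (htrans : ∀ x y z, P x y → P y z → P x z) :
    (∀ x y, ¬ Ing P x y → ∃ z, Ing P z x ∧ MExt P z y) ↔
      (∀ x y, (∀ u, MExt P u y → MExt P u x) → Ing P x y) :=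
  ⟨fun ssp _ _ => ing_of_forall_mext_imp_of_ssp ssp,
    fun hext _ _ => ssp_of_forall_mext_imp_ing htrans hext⟩
end

section
/- Assume P is transitive and irreflexive and satisfies the Strong Supplementation Principle. Then for every x ∈ U and S : Set U: Sum x S if and only if for every u, u overlaps x exactly when some element of S overlaps u (Leśniewski's second definition of collective class). -/
variable {U : Type*}

/-!
Forward: every ingrediens of `x` meets some element of `S`, and overlap propagates upwards along
`Ing`. Backward: strong supplementation says that `s` is an ingrediens of `x` as soon as
everything overlapping `s` overlaps `x`.
-/

section

variable {P : U → U → Prop}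

theorem Ing.refl (x : U) : Ing P x x := Or.inl rfl

theorem Ing.trans_s13 (htrans : ∀ x y z, P x y → P y z → P x z) {a b c : U}
    (hab : Ing P a b) (hbc : Ing P b c) : Ing P a c := by
  rcases hab with rfl | hab
  · exact hbc
  rcases hbc with rfl | hbc
  · exact Or.inr hab
  · exact Or.inr (htrans _ _ _ hab hbc)

theorem Ov.symm {a b : U} (h : Ov P a b) : Ov P b a :=
  let ⟨z, hza, hzb⟩ := h
  ⟨z, hzb, hza⟩

theorem Ing.ov {a b : U} (h : Ing P a b) : Ov P a b := ⟨a, Ing.refl a, h⟩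

theorem Ov.mono_right (htrans : ∀ x y z, P x y → P y z → P x z) {a b c : U}
    (h : Ov P a b) (hbc : Ing P b c) : Ov P a c :=
  let ⟨z, hza, hzb⟩ := h
  ⟨z, hza, hzb.trans_s13 htrans hbc⟩

theorem ing_of_forall_ov (hSSP : ∀ x y, ¬ Ing P x y → ∃ z, Ing P z x ∧ MExt P z y) {s x : U}
    (h : ∀ z, Ov P z s → Ov P z x) : Ing P s x := by
  by_contra hsx
  obtain ⟨z, hzs, hzx⟩ := hSSP s x hsx
  exact hzx (h z hzs.ov)

theorem MSum.ov_iff (htrans : ∀ x y z, P x y → P y z → P x z) {x : U} {S : Set U}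
    (hsum : MSum P x S) (u : U) : Ov P u x ↔ ∃ s ∈ S, Ov P s u := by
  constructor
  · rintro ⟨z, hzu, hzx⟩
    obtain ⟨s, hs, hsz⟩ := hsum.2 z hzx
    exact ⟨s, hs, hsz.mono_right htrans hzu⟩
  · rintro ⟨s, hs, hsu⟩
    exact hsu.symm.mono_right htrans (hsum.1 s hs)

theorem msum_of_forall_ov_iff (hSSP : ∀ x y, ¬ Ing P x y → ∃ z, Ing P z x ∧ MExt P z y)
    {x : U} {S : Set U} (h : ∀ u, Ov P u x ↔ ∃ s ∈ S, Ov P s u) : MSum P x S :=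
  ⟨fun s hs => ing_of_forall_ov hSSP fun z hzs => (h z).2 ⟨s, hs, hzs.symm⟩,
    fun u hux => (h u).1 hux.ov⟩

end

theorem stmt_13_general (P : U → U → Prop)
    (htrans : ∀ x y z, P x y → P y z → P x z)
    (hSSP : ∀ x y, ¬ Ing P x y → ∃ z, Ing P z x ∧ MExt P z y) :
    ∀ (x : U) (S : Set U),
      MSum P x S ↔ ∀ u, (Ov P u x ↔ ∃ s ∈ S, Ov P s u) :=
  fun _ _ => ⟨fun hsum => hsum.ov_iff htrans, msum_of_forall_ov_iff hSSP⟩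

theorem stmt_13 (P : U → U → Prop)
    (htrans : ∀ x y z, P x y → P y z → P x z)
    (hirr : ∀ x, ¬ P x x)
    (hSSP : ∀ x y, ¬ Ing P x y → ∃ z, Ing P z x ∧ MExt P z y) :
    ∀ (x : U) (S : Set U),
      MSum P x S ↔ ∀ u, (Ov P u x ↔ ∃ s ∈ S, Ov P s u) :=
  stmt_13_general P htrans hSSP
end
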